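/- There exist infinitely many rational numbers c such that the map f_c(z) = z^2 + c has exactly 8 rational preperiodic points, of which exactly 4 are periodic: two are fixed points of f_c, and the other two form a cycle of exact length 2. (This data characterizes the directed graph 8(2,1,1).) -/

import Mathlib

/-- The quadratic map `f_c(z) = z² + c`. -/
def fc (c : ℚ) : ℚ → ℚ := fun z => z ^ 2 + c

/-- `x` is preperiodic for `f_c`: its forward orbit is eventually periodic. -/
def IsPreper (c x : ℚ) : Prop := ∃ m n : ℕ, m < n ∧ (fc c)^[m] x = (fc c)^[n] x

/-- `x` is periodic for `f_c`. -/
def IsPer (c x : ℚ) : Prop := ∃ n : ℕ, 1 ≤ n ∧ (fc c)^[n] x = x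

/-! For an odd prime `p` take `c = -(p⁴ + p² + 1) / 4p²`. Then `(p² + p + 1)/2p` and
`-(p² - p + 1)/2p` are fixed, `(p² - p - 1)/2p ↔ -(p² + p - 1)/2p` is a 2-cycle, and the negatives
of these four points map onto them: eight preperiodic points, four of them periodic.

There are no others. For a prime `ℓ`, once `v_ℓ(x) < 0` and `2 v_ℓ(x) < v_ℓ(c)` the valuation
doubles along the orbit, so `x` is not preperiodic; as `v_2(c) = v_p(c) = -2` and `v_ℓ(c) ≥ 0`
otherwise, a preperiodic point is `a / 2p` with `a` odd. In these numerators the map is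
`a ↦ (a² - (p⁴ + p² + 1)) / 2p`, and integrality of the next two numerators forces
`a ≡ ±1 (mod p)`, then `(a ∓ 1) / p ≡ ±1 (mod p)`; with the real bound `|a| ≤ p² + p + 1` this
leaves `a = ±p² ± p ± 1`. Distinct primes give distinct `c`.
-/

open Function Set

lemma strictMono_iterate_of_mapsTo {α : Type*} [Preorder α] {g : α → α} {T : Set α}
    (hT : MapsTo g T T) (hg : ∀ y ∈ T, y < g y) {x : α} (hx : x ∈ T) :
    StrictMono fun n => g^[n] x :=
  strictMono_nat_of_lt_succ fun n => by
    simpa only [iterate_succ_apply'] using hg _ (hT.iterate n hx)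

section Dynamics

variable {c x : ℚ}

lemma IsPreper.apply (h : IsPreper c x) : IsPreper c (fc c x) := by
  obtain ⟨m, n, hmn, he⟩ := h
  refine ⟨m, n, hmn, ?_⟩
  simp only [← iterate_succ_apply, iterate_succ_apply', he]

lemma IsPreper.of_apply (h : IsPreper c (fc c x)) : IsPreper c x := by
  obtain ⟨m, n, hmn, he⟩ := h
  exact ⟨m + 1, n + 1, by omega, by simpa only [iterate_succ_apply] using he⟩

lemma IsPer.isPreper (h : IsPer c x) : IsPreper c x := by
  obtain ⟨n, hn, he⟩ := h
  exact ⟨0, n, hn, he.symm⟩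

lemma fc_neg (z : ℚ) : fc c (-z) = fc c z := by
  simp only [fc, neg_sq]

lemma IsPreper.neg (h : IsPreper c x) : IsPreper c (-x) :=
  IsPreper.of_apply (by rw [fc_neg]; exact h.apply)

lemma not_isPer_of_mapsTo {z : ℚ} {T : Set ℚ} (hT : MapsTo (fc c) T T) (hz : fc c z ∈ T)
    (hzT : z ∉ T) : ¬ IsPer c z := by
  rintro ⟨_ | n, hn, he⟩
  · omega
  · exact hzT (he ▸ iterate_succ_apply (fc c) n z ▸ hT.iterate n hz)

lemma not_isPer_neg_of_fixed {a : ℚ} (ha : fc c a = a) (ha0 : a ≠ 0) : ¬ IsPer c (-a) :=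
  not_isPer_of_mapsTo (T := {a}) (mapsTo_singleton.mpr ha) (by simp [fc_neg, ha])
    (by simpa [neg_eq_iff_add_eq_zero, ← two_mul] using ha0)

lemma not_isPer_neg_of_two_cycle {y : ℚ} (hx : fc c x = y) (hy : fc c y = x)
    (hxx : -x ≠ x) (hxy : -x ≠ y) : ¬ IsPer c (-x) :=
  not_isPer_of_mapsTo (T := {x, y}) (by simp [MapsTo, hx, hy]) (by simp [fc_neg, hx])
    (by simp [hxx, hxy])

lemma IsPreper.not_strictMono (h : IsPreper c x) :
    ¬ StrictMono fun n => (fc c)^[n] x := by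
  obtain ⟨m, n, hmn, he⟩ := h
  exact fun hmono => hmn.ne (hmono.injective he)

/-- Past the fixed point `A` orbits increase strictly, and `fc c` sends `(-∞, -A)` past `A`. -/
lemma abs_le_of_isPreper {A : ℚ} (hA : fc c A = A) (h2A : 1 < 2 * A) (h : IsPreper c x) :
    |x| ≤ A := by
  simp only [fc] at hA
  have hT : MapsTo (fc c) (Ioi A) (Ioi A) := fun y (hy : A < y) =>
    show A < y ^ 2 + c by nlinarith
  have hg : ∀ y ∈ Ioi A, y < fc c y := fun y (hy : A < y) =>
    show y < y ^ 2 + c by nlinarith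
  have hle : ∀ y, IsPreper c y → y ≤ A := fun y hy => by
    by_contra! hlt
    exact hy.not_strictMono (strictMono_iterate_of_mapsTo hT hg hlt)
  refine abs_le.mpr ⟨?_, hle x h⟩
  by_contra! hlt
  exact (hle _ h.apply).not_gt (show A < x ^ 2 + c by nlinarith)

end Dynamics

section Valuation

variable {ℓ : ℕ} [Fact ℓ.Prime] {c x : ℚ}

lemma padicValRat_sq (x : ℚ) : padicValRat ℓ (x ^ 2) = 2 * padicValRat ℓ x := by
  rw [padicValRat.pow]; norm_cast

lemma padicValRat_fc_of_lt (hx : x ≠ 0) (hc : c ≠ 0)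
    (h : 2 * padicValRat ℓ x < padicValRat ℓ c) :
    fc c x ≠ 0 ∧ padicValRat ℓ (fc c x) = 2 * padicValRat ℓ x := by
  have hsq := padicValRat_sq (ℓ := ℓ) x
  have hne : x ^ 2 + c ≠ 0 := fun h0 => by
    rw [eq_neg_of_add_eq_zero_right h0, padicValRat.neg, hsq] at h
    exact h.false
  refine ⟨hne, ?_⟩
  rw [fc, padicValRat.add_eq_of_lt hne (pow_ne_zero 2 hx) hc (hsq ▸ h), hsq]

lemma padicValRat_iterate_fc (hx : x ≠ 0) (hc : c ≠ 0) (hneg : padicValRat ℓ x < 0)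
    (h : 2 * padicValRat ℓ x < padicValRat ℓ c) (n : ℕ) :
    (fc c)^[n] x ≠ 0 ∧ padicValRat ℓ ((fc c)^[n] x) = 2 ^ n * padicValRat ℓ x := by
  induction n with
  | zero => simpa using hx
  | succ n ih =>
    have hpow : (1 : ℤ) ≤ 2 ^ n := one_le_pow₀ (by norm_num)
    obtain ⟨hne, hval⟩ := padicValRat_fc_of_lt (ℓ := ℓ) ih.1 hc (by rw [ih.2]; nlinarith)
    rw [iterate_succ_apply', hval, ih.2, pow_succ]
    exact ⟨hne, by ring⟩

lemma not_isPreper_of_padicValRat_lt (hc : c ≠ 0) (hneg : padicValRat ℓ x < 0)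
    (h : 2 * padicValRat ℓ x < padicValRat ℓ c) : ¬ IsPreper c x := by
  have hx : x ≠ 0 := by rintro rfl; simp at hneg
  rintro ⟨m, n, hmn, he⟩
  have hval := (padicValRat_iterate_fc hx hc hneg h m).2
  rw [he, (padicValRat_iterate_fc hx hc hneg h n).2] at hval
  have : (2 : ℤ) ^ m < 2 ^ n := pow_lt_pow_right₀ (by norm_num) hmn
  nlinarith

lemma padicValRat_nonneg_of_isPreper (hc : c ≠ 0) (hvc : 0 ≤ padicValRat ℓ c)
    (h : IsPreper c x) : 0 ≤ padicValRat ℓ x := by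
  by_contra! hneg
  exact not_isPreper_of_padicValRat_lt hc hneg (by omega) h

lemma padicValRat_eq_neg_one_of_isPreper (hc : c ≠ 0) (hvc : padicValRat ℓ c = -2)
    (h : IsPreper c x) : padicValRat ℓ x = -1 := by
  have hc_escapes : ¬ IsPreper c c :=
    not_isPreper_of_padicValRat_lt (ℓ := ℓ) hc (by omega) (by omega)
  have hx : x ≠ 0 := by
    rintro rfl
    exact hc_escapes (by simpa [fc] using h.apply)
  by_contra hne
  rcases lt_or_gt_of_ne hne with hlt | hgt
  · exact not_isPreper_of_padicValRat_lt hc (by omega : padicValRat ℓ x < 0) (by omega) h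
  -- otherwise `fc c x` has the valuation `-2` of `c`, and escapes
  by_cases hfx : fc c x = 0
  · have h2 := h.apply.apply
    rw [hfx] at h2
    exact hc_escapes (by simpa [fc] using h2)
  have hval : padicValRat ℓ (fc c x) = -2 := by
    rw [fc, add_comm] at hfx ⊢
    rw [padicValRat.add_eq_of_lt hfx hc (pow_ne_zero 2 hx)
      (by rw [padicValRat_sq]; omega), hvc]
  exact not_isPreper_of_padicValRat_lt (ℓ := ℓ) hc (by omega) (by omega) h.apply

end Valuation

lemma Rat.den_eq_one_of_padicValRat_nonneg {y : ℚ}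
    (h : ∀ ℓ : ℕ, ℓ.Prime → 0 ≤ padicValRat ℓ y) : y.den = 1 := by
  by_contra hden
  obtain ⟨ℓ, hℓ, hdvd⟩ := Nat.exists_prime_and_dvd hden
  have : Fact ℓ.Prime := ⟨hℓ⟩
  have hnum : ¬ (ℓ : ℤ) ∣ y.num := fun hnum =>
    hℓ.one_lt.ne' (Nat.Coprime.eq_one_of_dvd
      (y.reduced.coprime_dvd_left (Int.natCast_dvd.mp hnum)) hdvd)
  have hval := h ℓ hℓ
  rw [padicValRat_def, padicValInt.eq_zero_of_not_dvd hnum] at hval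
  have := one_le_padicValNat_of_dvd y.pos.ne' hdvd
  omega

lemma exists_odd_eq_div_of_padicValRat {p : ℕ} (hp : p.Prime) (hp2 : p ≠ 2) {x : ℚ}
    (h2 : padicValRat 2 x = -1) (hpx : padicValRat p x = -1)
    (hother : ∀ ℓ : ℕ, ℓ.Prime → ℓ ≠ 2 → ℓ ≠ p → 0 ≤ padicValRat ℓ x) :
    ∃ a : ℤ, Odd a ∧ x = a / (2 * p) := by
  have : Fact p.Prime := ⟨hp⟩
  have hx : x ≠ 0 := by rintro rfl; simp at h2
  have h2p : ((2 * p : ℕ) : ℚ) ≠ 0 := by norm_cast; exact mul_ne_zero two_ne_zero hp.ne_zero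
  set y : ℚ := ((2 * p : ℕ) : ℚ) * x with hy
  have hval : ∀ ℓ : ℕ, ℓ.Prime →
      padicValRat ℓ y = padicValNat ℓ 2 + padicValNat ℓ p + padicValRat ℓ x := fun ℓ hℓ => by
    have : Fact ℓ.Prime := ⟨hℓ⟩
    rw [padicValRat.mul h2p hx, padicValRat.of_nat, padicValNat.mul two_ne_zero hp.ne_zero]
    push_cast; rfl
  have hval2 : padicValRat 2 y = 0 := by
    rw [hval 2 Nat.prime_two, h2, padicValNat_self, padicValNat_primes (Ne.symm hp2)]; rfl
  have hnonneg : ∀ ℓ : ℕ, ℓ.Prime → 0 ≤ padicValRat ℓ y := fun ℓ hℓ => by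
    have : Fact ℓ.Prime := ⟨hℓ⟩
    rcases eq_or_ne ℓ 2 with rfl | hℓ2
    · exact hval2.ge
    rw [hval ℓ hℓ, padicValNat_primes hℓ2]
    rcases eq_or_ne ℓ p with rfl | hℓp
    · rw [hpx, padicValNat_self]; rfl
    · rw [padicValNat_primes hℓp]
      simpa using hother ℓ hℓ hℓ2 hℓp
  have hyint : (y.num : ℚ) = y := Rat.coe_int_num_of_den_eq_one
    (Rat.den_eq_one_of_padicValRat_nonneg hnonneg)
  refine ⟨y.num, ?_, ?_⟩
  · rw [← Int.not_even_iff_odd, even_iff_two_dvd]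
    intro hdvd
    have hnum0 : y.num ≠ 0 := Rat.num_ne_zero.mpr (mul_ne_zero h2p hx)
    have := ((padicValInt_dvd_iff (p := 2) 1 y.num).mp (by simpa using hdvd)).resolve_left hnum0
    rw [← hyint, padicValRat.of_int] at hval2
    omega
  · have hp0 : (p : ℚ) ≠ 0 := Nat.cast_ne_zero.mpr hp.ne_zero
    rw [hyint, hy]
    push_cast
    field_simp

lemma exists_sign_add_mul_of_dvd_sq_sub_one {P a : ℤ} (hP : Prime P) (h : P ∣ a ^ 2 - 1) :
    ∃ ε k : ℤ, (ε = 1 ∨ ε = -1) ∧ a = ε + P * k := by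
  rw [show a ^ 2 - 1 = (a - 1) * (a + 1) by ring] at h
  rcases hP.dvd_mul.mp h with ⟨k, hk⟩ | ⟨k, hk⟩
  · exact ⟨1, k, .inl rfl, by linarith⟩
  · exact ⟨-1, k, .inr rfl, by linarith⟩

lemma abs_le_of_abs_sign_add_mul_le {P ε k n : ℤ} (hP : 3 ≤ P) (hε : ε = 1 ∨ ε = -1)
    (h : |ε + P * k| ≤ P * n + 1) : |k| ≤ n := by
  have hεabs : |ε| = 1 := by rcases hε with rfl | rfl <;> rfl
  have hPk : P * |k| ≤ P * n + 2 := by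
    have := abs_sub (ε + P * k) ε
    rw [add_sub_cancel_left, abs_mul, abs_of_pos (by omega), hεabs] at this
    linarith
  by_contra! hlt
  nlinarith

/-- Reducing `hab`, then `hbd`, modulo `p` fixes the balanced base-`p` digits of `a` one at a
time; the size bound and the parity of `a` leave exactly three of them. -/
lemma eq_sign_expansion_of_numerators {p : ℕ} (hp : p.Prime) (hp2 : p ≠ 2) {a b d : ℤ}
    (ha : Odd a) (hbound : |a| ≤ p ^ 2 + p + 1)
    (hab : a ^ 2 - (p ^ 4 + p ^ 2 + 1) = 2 * p * b)
    (hbd : b ^ 2 - (p ^ 4 + p ^ 2 + 1) = 2 * p * d) :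
    ∃ m δ ε : ℤ, (m = 1 ∨ m = -1) ∧ (δ = 1 ∨ δ = -1) ∧ (ε = 1 ∨ ε = -1) ∧
      a = m * p ^ 2 + δ * p + ε := by
  set P : ℤ := (p : ℤ)
  have hP : Prime P := Nat.prime_iff_prime_int.mp hp
  have hP3 : 3 ≤ P := by have := hp.two_le; omega
  have hPodd : Odd P := (Int.odd_coe_nat p).mpr (hp.odd_of_ne_two hp2)
  obtain ⟨ε, k, hε, rfl⟩ :=
    exists_sign_add_mul_of_dvd_sq_sub_one (a := a) hP ⟨2 * b + P ^ 3 + P, by linear_combination hab⟩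
  have hε2 : ε ^ 2 = 1 := by rcases hε with rfl | rfl <;> rfl
  have hk : Even k := by
    have hεodd : Odd ε := by rcases hε with rfl | rfl <;> decide
    have hPk : Even (P * k) := by simpa using ha.sub_odd hεodd
    exact (Int.even_mul.mp hPk).resolve_left (Int.not_even_iff_odd.mpr hPodd)
  have hbk : 2 * (b - ε * k) = P * (k ^ 2 - P ^ 2 - 1) :=
    mul_left_cancel₀ hP.ne_zero (by linear_combination -hab + hε2)
  have hPbk : P ∣ b - ε * k := by
    refine (hP.dvd_mul.mp ⟨_, hbk⟩).resolve_left fun h2 => ?_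
    have := Int.le_of_dvd two_pos h2
    omega
  have hPk2 : P ∣ k ^ 2 - 1 := by
    have hPb2 : P ∣ b ^ 2 - 1 := ⟨2 * d + P ^ 3 + P, by linear_combination hbd⟩
    have e : k ^ 2 - 1 = (b ^ 2 - 1) - (b - ε * k) * (b + ε * k) + (1 - ε ^ 2) * k ^ 2 := by ring
    rw [e, hε2, sub_self, zero_mul, add_zero]
    exact hPb2.sub (hPbk.mul_right _)
  obtain ⟨δ, m, hδ, rfl⟩ := exists_sign_add_mul_of_dvd_sq_sub_one hP hPk2
  have hkabs : |δ + P * m| ≤ P * 1 + 1 :=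
    abs_le_of_abs_sign_add_mul_le hP3 hε (by linarith)
  have hmabs := abs_le_of_abs_sign_add_mul_le hP3 hδ hkabs
  have hm : m = 1 ∨ m = -1 := by
    rcases abs_le.mp hmabs with ⟨h1, h2⟩
    have hm0 : m ≠ 0 := by
      rintro rfl
      rcases hδ with rfl | rfl <;> simp at hk
    omega
  exact ⟨m, δ, ε, hm, hδ, hε, by ring⟩

def HasGraph8211 (c : ℚ) : Prop :=
  {x : ℚ | IsPreper c x}.ncard = 8 ∧
    ∃ a b x y : ℚ, a ≠ b ∧ x ≠ y ∧
      {z : ℚ | IsPer c z} = {a, b, x, y} ∧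
      fc c a = a ∧ fc c b = b ∧ fc c x = y ∧ fc c y = x

namespace Graph8211

variable {q : ℚ}

def cFam (q : ℚ) : ℚ := -(q ^ 4 + q ^ 2 + 1) / (4 * q ^ 2)

def fixA (q : ℚ) : ℚ := (q ^ 2 + q + 1) / (2 * q)

def fixB (q : ℚ) : ℚ := -(q ^ 2 - q + 1) / (2 * q)

def cycX (q : ℚ) : ℚ := (q ^ 2 - q - 1) / (2 * q)

def cycY (q : ℚ) : ℚ := -(q ^ 2 + q - 1) / (2 * q)

def preperSet (q : ℚ) : Set ℚ :=
  {fixA q, -fixA q, fixB q, -fixB q, cycX q, -cycX q, cycY q, -cycY q}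

lemma fc_cFam_div_eq_div_iff (hq : q ≠ 0) (t s : ℚ) :
    fc (cFam q) (t / (2 * q)) = s / (2 * q) ↔ t ^ 2 - (q ^ 4 + q ^ 2 + 1) = 2 * q * s := by
  rw [fc, cFam]
  field_simp
  constructor <;> intro h <;> linarith

lemma fc_cFam_fixA (hq : q ≠ 0) : fc (cFam q) (fixA q) = fixA q :=
  (fc_cFam_div_eq_div_iff hq _ _).mpr (by ring)

lemma fc_cFam_fixB (hq : q ≠ 0) : fc (cFam q) (fixB q) = fixB q :=
  (fc_cFam_div_eq_div_iff hq _ _).mpr (by ring)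

lemma fc_cFam_cycX (hq : q ≠ 0) : fc (cFam q) (cycX q) = cycY q :=
  (fc_cFam_div_eq_div_iff hq _ _).mpr (by ring)

lemma fc_cFam_cycY (hq : q ≠ 0) : fc (cFam q) (cycY q) = cycX q :=
  (fc_cFam_div_eq_div_iff hq _ _).mpr (by ring)

lemma one_lt_two_mul_fixA (hq : 0 < q) : 1 < 2 * fixA q := by
  rw [fixA, mul_div_assoc', lt_div_iff₀ (by positivity)]
  nlinarith

lemma sign_expansion_div_mem_preperSet {m δ ε : ℚ} (hm : m = 1 ∨ m = -1)
    (hδ : δ = 1 ∨ δ = -1) (hε : ε = 1 ∨ ε = -1) :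
    (m * q ^ 2 + δ * q + ε) / (2 * q) ∈ preperSet q := by
  simp only [preperSet, fixA, fixB, cycX, cycY, mem_insert_iff, mem_singleton_iff]
  rcases hm with rfl | rfl <;> rcases hδ with rfl | rfl <;> rcases hε with rfl | rfl <;>
    ring_nf <;> simp only [true_or, or_true]

lemma preperSet_chain (hq : 2 ≤ q) :
    0 < cycX q ∧ cycX q < -fixB q ∧ -fixB q < -cycY q ∧ -cycY q < fixA q := by
  have hD : 0 < 2 * q := by linarith
  simp only [fixA, fixB, cycX, cycY, neg_div, neg_neg]
  refine ⟨div_pos (by nlinarith) hD, ?_, ?_, ?_⟩ <;>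
    exact div_lt_div_of_pos_right (by linarith) hD

lemma ncard_preperSet (hq : 2 ≤ q) : (preperSet q).ncard = 8 := by
  obtain ⟨hX, hXB, hBY, hYA⟩ := preperSet_chain hq
  rw [preperSet, ncard_eq_toFinset_card']
  simp only [toFinset_insert, toFinset_singleton]
  rw [Finset.card_insert_of_notMem, Finset.card_insert_of_notMem, Finset.card_insert_of_notMem,
    Finset.card_insert_of_notMem, Finset.card_insert_of_notMem, Finset.card_insert_of_notMem,
    Finset.card_insert_of_notMem, Finset.card_singleton]
  all_goals
    simp only [Finset.mem_insert, Finset.mem_singleton, not_or]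
    and_intros <;> intro h <;> linarith

lemma isPreper_of_mem_preperSet (hq : q ≠ 0) {x : ℚ} (hx : x ∈ preperSet q) :
    IsPreper (cFam q) x := by
  have hA : IsPreper (cFam q) (fixA q) := IsPer.isPreper ⟨1, le_rfl, fc_cFam_fixA hq⟩
  have hB : IsPreper (cFam q) (fixB q) := IsPer.isPreper ⟨1, le_rfl, fc_cFam_fixB hq⟩
  have hX : IsPreper (cFam q) (cycX q) :=
    IsPer.isPreper ⟨2, one_le_two, by simp [fc_cFam_cycX hq, fc_cFam_cycY hq]⟩
  have hY : IsPreper (cFam q) (cycY q) :=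
    IsPer.isPreper ⟨2, one_le_two, by simp [fc_cFam_cycX hq, fc_cFam_cycY hq]⟩
  simp only [preperSet, mem_insert_iff, mem_singleton_iff] at hx
  rcases hx with rfl | rfl | rfl | rfl | rfl | rfl | rfl | rfl
  exacts [hA, hA.neg, hB, hB.neg, hX, hX.neg, hY, hY.neg]

section PrimeFamily

variable {p : ℕ}

lemma coprime_two_mul_of_odd (hp : Odd p) : Nat.Coprime (p ^ 4 + p ^ 2 + 1) (2 * p) := by
  obtain ⟨j, rfl⟩ := hp
  have e : (2 * j + 1) ^ 4 + (2 * j + 1) ^ 2 + 1 =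
      1 + ((2 * j + 1) * (2 * j ^ 2 + 2 * j + 1)) * (2 * (2 * j + 1)) := by ring
  rw [e, Nat.coprime_add_mul_right_left]
  exact Nat.coprime_one_left _

lemma padicValRat_cFam (ℓ : ℕ) [Fact ℓ.Prime] (hp : p ≠ 0) :
    padicValRat ℓ (cFam p) = padicValNat ℓ (p ^ 4 + p ^ 2 + 1) - 2 * padicValNat ℓ (2 * p) := by
  have hN : ((p ^ 4 + p ^ 2 + 1 : ℕ) : ℚ) ≠ 0 := by positivity
  have hD : ((2 * p : ℕ) : ℚ) ≠ 0 := by norm_cast; omega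
  have e : cFam p = -(((p ^ 4 + p ^ 2 + 1 : ℕ) : ℚ) / ((2 * p : ℕ) : ℚ) ^ 2) := by
    rw [cFam]; push_cast; ring
  rw [e, padicValRat.neg, padicValRat.div hN (pow_ne_zero 2 hD), padicValRat_sq,
    padicValRat.of_nat, padicValRat.of_nat]

lemma padicValRat_cFam_of_dvd (hp : p.Prime) (hp2 : p ≠ 2) {ℓ : ℕ} [hℓ : Fact ℓ.Prime]
    (hℓp : ℓ = 2 ∨ ℓ = p) : padicValRat ℓ (cFam p) = -2 := by
  have : Fact p.Prime := ⟨hp⟩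
  have hval : padicValNat ℓ (2 * p) = 1 := by
    rw [padicValNat.mul two_ne_zero hp.ne_zero]
    rcases hℓp with rfl | rfl
    · rw [padicValNat_self, padicValNat_primes (Ne.symm hp2)]
    · rw [padicValNat_primes hp2, padicValNat_self]
  have hdvd : ℓ ∣ 2 * p := by rcases hℓp with rfl | rfl <;> simp
  have hN : padicValNat ℓ (p ^ 4 + p ^ 2 + 1) = 0 := padicValNat.eq_zero_of_not_dvd fun h =>
    hℓ.out.one_lt.ne' (Nat.eq_one_of_dvd_coprimes (coprime_two_mul_of_odd
      (hp.odd_of_ne_two hp2)) h hdvd)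
  rw [padicValRat_cFam ℓ hp.ne_zero, hval, hN]
  rfl

lemma padicValRat_cFam_nonneg (hp : p.Prime) {ℓ : ℕ} [Fact ℓ.Prime] (hℓ2 : ℓ ≠ 2)
    (hℓp : ℓ ≠ p) : 0 ≤ padicValRat ℓ (cFam p) := by
  have : Fact p.Prime := ⟨hp⟩
  rw [padicValRat_cFam ℓ hp.ne_zero, padicValNat.mul two_ne_zero hp.ne_zero,
    padicValNat_primes hℓ2, padicValNat_primes hℓp]
  simp

lemma exists_odd_eq_div_of_isPreper (hp : p.Prime) (hp2 : p ≠ 2) {x : ℚ}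
    (hx : IsPreper (cFam p) x) : ∃ a : ℤ, Odd a ∧ x = a / (2 * p) := by
  have hc : cFam p ≠ 0 := by
    have : (0 : ℚ) < p := by exact_mod_cast hp.pos
    rw [cFam, neg_div, neg_ne_zero]
    positivity
  have : Fact p.Prime := ⟨hp⟩
  refine exists_odd_eq_div_of_padicValRat hp hp2
    (padicValRat_eq_neg_one_of_isPreper hc (padicValRat_cFam_of_dvd hp hp2 (.inl rfl)) hx)
    (padicValRat_eq_neg_one_of_isPreper hc (padicValRat_cFam_of_dvd hp hp2 (.inr rfl)) hx)
    fun ℓ hℓ hℓ2 hℓp => ?_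
  have : Fact ℓ.Prime := ⟨hℓ⟩
  exact padicValRat_nonneg_of_isPreper hc (padicValRat_cFam_nonneg hp hℓ2 hℓp) hx

lemma mem_preperSet_of_isPreper (hp : p.Prime) (hp2 : p ≠ 2) {x : ℚ}
    (hx : IsPreper (cFam p) x) : x ∈ preperSet p := by
  have hq : (p : ℚ) ≠ 0 := Nat.cast_ne_zero.mpr hp.ne_zero
  have hD : (0 : ℚ) < 2 * p := by have := hp.pos; positivity
  obtain ⟨a, ha, rfl⟩ := exists_odd_eq_div_of_isPreper hp hp2 hx
  obtain ⟨b, -, hb⟩ := exists_odd_eq_div_of_isPreper hp hp2 hx.apply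
  obtain ⟨d, -, hd⟩ := exists_odd_eq_div_of_isPreper hp hp2 hx.apply.apply
  rw [hb] at hd
  have hab : a ^ 2 - (p ^ 4 + p ^ 2 + 1) = 2 * p * b := by
    exact_mod_cast (fc_cFam_div_eq_div_iff hq _ _).mp hb
  have hbd : b ^ 2 - (p ^ 4 + p ^ 2 + 1) = 2 * p * d := by
    exact_mod_cast (fc_cFam_div_eq_div_iff hq _ _).mp hd
  have hbound : |a| ≤ p ^ 2 + p + 1 := by
    have h := abs_le_of_isPreper (fc_cFam_fixA hq) (one_lt_two_mul_fixA (by positivity)) hx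
    rw [fixA, abs_div, abs_of_pos hD, div_le_div_iff_of_pos_right hD] at h
    exact_mod_cast h
  obtain ⟨m, δ, ε, hm, hδ, hε, rfl⟩ := eq_sign_expansion_of_numerators hp hp2 ha hbound hab hbd
  push_cast
  exact sign_expansion_div_mem_preperSet (by exact_mod_cast hm) (by exact_mod_cast hδ)
    (by exact_mod_cast hε)

lemma setOf_isPreper_cFam (hp : p.Prime) (hp2 : p ≠ 2) :
    {x : ℚ | IsPreper (cFam p) x} = preperSet p :=
  ext fun _ => ⟨mem_preperSet_of_isPreper hp hp2,
    isPreper_of_mem_preperSet (Nat.cast_ne_zero.mpr hp.ne_zero)⟩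

lemma setOf_isPer_cFam (hp : p.Prime) (hp2 : p ≠ 2) :
    {z : ℚ | IsPer (cFam p) z} = {fixA p, fixB p, cycX p, cycY p} := by
  have hq : (p : ℚ) ≠ 0 := Nat.cast_ne_zero.mpr hp.ne_zero
  obtain ⟨hX, hXB, hBY, hYA⟩ := preperSet_chain (q := p) (by exact_mod_cast hp.two_le)
  ext z
  simp only [mem_ofPred_eq, mem_insert_iff, mem_singleton_iff]
  constructor
  · intro hz
    have hmem := mem_preperSet_of_isPreper hp hp2 hz.isPreper
    simp only [preperSet, mem_insert_iff, mem_singleton_iff] at hmem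
    rcases hmem with rfl | rfl | rfl | rfl | rfl | rfl | rfl | rfl
    · exact .inl rfl
    · exact absurd hz (not_isPer_neg_of_fixed (fc_cFam_fixA hq) (by linarith))
    · exact .inr (.inl rfl)
    · exact absurd hz (not_isPer_neg_of_fixed (fc_cFam_fixB hq) (by linarith))
    · exact .inr (.inr (.inl rfl))
    · exact absurd hz (not_isPer_neg_of_two_cycle (fc_cFam_cycX hq) (fc_cFam_cycY hq)
        (by linarith) (by linarith))
    · exact .inr (.inr (.inr rfl))
    · exact absurd hz (not_isPer_neg_of_two_cycle (fc_cFam_cycY hq) (fc_cFam_cycX hq)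
        (by linarith) (by linarith))
  · rintro (rfl | rfl | rfl | rfl)
    · exact ⟨1, le_rfl, fc_cFam_fixA hq⟩
    · exact ⟨1, le_rfl, fc_cFam_fixB hq⟩
    · exact ⟨2, one_le_two, by simp [fc_cFam_cycX hq, fc_cFam_cycY hq]⟩
    · exact ⟨2, one_le_two, by simp [fc_cFam_cycX hq, fc_cFam_cycY hq]⟩

lemma hasGraph8211_cFam (hp : p.Prime) (hp2 : p ≠ 2) : HasGraph8211 (cFam p) := by
  have hq : (p : ℚ) ≠ 0 := Nat.cast_ne_zero.mpr hp.ne_zero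
  have hq2 : (2 : ℚ) ≤ p := by exact_mod_cast hp.two_le
  obtain ⟨hX, hXB, hBY, hYA⟩ := preperSet_chain hq2
  refine ⟨by rw [setOf_isPreper_cFam hp hp2, ncard_preperSet hq2], fixA p, fixB p, cycX p, cycY p,
    by linarith, by linarith, setOf_isPer_cFam hp hp2,
    fc_cFam_fixA hq, fc_cFam_fixB hq, fc_cFam_cycX hq, fc_cFam_cycY hq⟩

end PrimeFamily

lemma cFam_strictAntiOn : StrictAntiOn cFam (Ici 1) := by
  intro a (ha : 1 ≤ a) b (hb : 1 ≤ b) hab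
  rw [cFam, cFam, neg_div, neg_div, neg_lt_neg_iff, div_lt_div_iff₀ (by positivity) (by positivity)]
  have h1 : 0 < b ^ 2 - a ^ 2 := by nlinarith
  have h2 : 0 < a ^ 2 * b ^ 2 - 1 := by nlinarith [one_le_pow₀ (n := 2) ha]
  nlinarith [mul_pos h1 h2]

lemma injOn_cFam_natCast : InjOn (fun n : ℕ => cFam n) {n | 0 < n} :=
  cFam_strictAntiOn.injOn.comp Nat.cast_injective.injOn fun _ hn =>
    mem_Ici.mpr (Nat.one_le_cast.mpr hn)

end Graph8211

/-- Graph 8(2,1,1): infinitely many `c ∈ ℚ` with exactly 8 rational preperiodic points,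
exactly 4 of them periodic: two fixed points and one 2-cycle. -/
theorem graph_8_2_1_1 :
    {c : ℚ | {x : ℚ | IsPreper c x}.ncard = 8 ∧
      ∃ a b x y : ℚ, a ≠ b ∧ x ≠ y ∧
        {z : ℚ | IsPer c z} = {a, b, x, y} ∧
        fc c a = a ∧ fc c b = b ∧ fc c x = y ∧ fc c y = x}.Infinite :=
  infinite_of_injOn_mapsTo (s := {p : ℕ | p.Prime} \ {2})
    (Graph8211.injOn_cFam_natCast.mono fun _ hp => hp.1.pos)
    (fun _ hp => Graph8211.hasGraph8211_cFam hp.1 hp.2)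
    (Nat.infinite_setOfPred_prime.sdiff (finite_singleton 2))
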